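/- Let n be an even positive integer and F : 𝔽_2^n → 𝔽_2^n a plateaued APN function. Then the number of nonzero b ∈ 𝔽_2^n for which the component F_b is bent is congruent to 2 modulo 4. -/

import Mathlib

open Finset

/-- The integer-valued Walsh transform of `F : 𝔽_2^n → 𝔽_2^n`:
`W_F(b,a) = ∑_x (-1)^{⟨b,F(x)⟩ + ⟨a,x⟩}`. -/
def walshB (n : ℕ) (F : (Fin n → ZMod 2) → (Fin n → ZMod 2))
    (b a : Fin n → ZMod 2) : ℤ :=
  ∑ x : Fin n → ZMod 2, (-1 : ℤ) ^ ((∑ i, b i * F x i).val + (∑ i, a i * x i).val)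

/-- The imbalance `Nb_F = 2^{-n} ∑_{b ≠ 0} W_F(b,0)²`. -/
noncomputable def NbB (n : ℕ) (F : (Fin n → ZMod 2) → (Fin n → ZMod 2)) : ℝ :=
  ((2 : ℝ) ^ n)⁻¹ *
    ∑ b ∈ univ.filter (fun b : Fin n → ZMod 2 => b ≠ 0), ((walshB n F b 0 : ℝ)) ^ 2

/-- `F` is APN: for every `a ≠ 0` and every `b`, the equation `F(x+a) + F(x) = b` has at
most 2 solutions. -/
def IsAPNB (n : ℕ) (F : (Fin n → ZMod 2) → (Fin n → ZMod 2)) : Prop :=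
  ∀ a : Fin n → ZMod 2, a ≠ 0 → ∀ b : Fin n → ZMod 2,
    (univ.filter fun x => F (x + a) + F x = b).card ≤ 2

/-- The component `F_b` is `t`-plateaued: `|W_F(b,a)| ∈ {0, 2^{(n+t)/2}}` for all `a`,
expressed via squares of the integer Walsh coefficients. -/
def IsTPlateauedB (n : ℕ) (F : (Fin n → ZMod 2) → (Fin n → ZMod 2))
    (b : Fin n → ZMod 2) (t : ℕ) : Prop :=
  ∀ a : Fin n → ZMod 2, walshB n F b a = 0 ∨ (walshB n F b a) ^ 2 = 2 ^ (n + t)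

/-- `F` is plateaued: every nonzero component is `t_b`-plateaued for some `t_b`. -/
def IsPlateauedB (n : ℕ) (F : (Fin n → ZMod 2) → (Fin n → ZMod 2)) : Prop :=
  ∀ b : Fin n → ZMod 2, b ≠ 0 → ∃ t : ℕ, IsTPlateauedB n F b t

/-- The component `F_b` is bent: `|W_F(b,a)| = 2^{n/2}` for all `a`, i.e.
`W_F(b,a)² = 2^n`. -/
def IsBentB (n : ℕ) (F : (Fin n → ZMod 2) → (Fin n → ZMod 2))
    (b : Fin n → ZMod 2) : Prop :=
  ∀ a : Fin n → ZMod 2, (walshB n F b a) ^ 2 = 2 ^ n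

instance (n : ℕ) (F : (Fin n → ZMod 2) → (Fin n → ZMod 2)) (b : Fin n → ZMod 2) :
    Decidable (IsBentB n F b) := by
  unfold IsBentB; infer_instance

/-!
Write `W_b(a)` for the Walsh coefficients and `D_cF(x) = F(x + c) + F(x)`. Parseval together with
the Wiener–Khinchin identity `W_b(a)² = ∑_c A_b(c) (-1)^{⟨a,c⟩}`, where `A_b` is the
autocorrelation of the component `F_b`, gives
`∑_{a,b} W_b(a)⁴ = 2^{2n} · #{(c, x, y) : D_cF(x) = D_cF(y)}`, and for an APN function this count
is `2^{2n} + (2^n - 1) 2^{n+1}`. A `t_b`-plateaued component contributes `2^{3n + t_b}` to the left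
side, whence `∑_{b ≠ 0} 2^{t_b} = 2^{n+1} - 2`. For even `n` every `t_b` is even and `t_b = 0`
exactly when `F_b` is bent, so modulo 4 the left side counts the bent components.
-/

def sgn (c : ZMod 2) : ℤ := (-1) ^ c.val

lemma sgn_add : ∀ c d : ZMod 2, sgn (c + d) = sgn c * sgn d := by decide

lemma sgn_sq : ∀ c : ZMod 2, sgn c ^ 2 = 1 := by decide

lemma sgn_sum {α : Type*} (s : Finset α) (f : α → ZMod 2) :
    sgn (∑ i ∈ s, f i) = ∏ i ∈ s, sgn (f i) := by
  induction s using Finset.cons_induction with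
  | empty => rfl
  | cons a s _ ih => rw [sum_cons, prod_cons, sgn_add, ih]

section Orthogonality

variable {ι : Type*} [Fintype ι] [DecidableEq ι]

lemma sum_sgn_dotProduct (v : ι → ZMod 2) :
    ∑ u : ι → ZMod 2, sgn (u ⬝ᵥ v) = if v = 0 then 2 ^ Fintype.card ι else 0 := by
  have hcoord : ∀ c : ZMod 2, ∑ a : ZMod 2, sgn (a * c) = if c = 0 then 2 else 0 := by decide
  calc ∑ u : ι → ZMod 2, sgn (u ⬝ᵥ v)
      = ∏ i, ∑ a : ZMod 2, sgn (a * v i) := by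
        simp only [dotProduct, sgn_sum, prod_univ_sum, Fintype.piFinset_univ]
    _ = ∏ i, if v i = 0 then (2 : ℤ) else 0 := by simp only [hcoord]
    _ = if v = 0 then 2 ^ Fintype.card ι else 0 := by
        split_ifs with hv
        · simp [hv]
        · obtain ⟨i, hi⟩ := Function.ne_iff.mp hv
          exact prod_eq_zero (mem_univ i) (if_neg hi)

lemma sum_sq_sum_mul_sgn_dotProduct {α : Type*} [Fintype α] (w : α → ℤ) (h : α → ι → ZMod 2) :
    ∑ u : ι → ZMod 2, (∑ x, w x * sgn (u ⬝ᵥ h x)) ^ 2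
      = 2 ^ Fintype.card ι * ∑ x, ∑ y with h y = h x, w x * w y := by
  have hsq : ∀ u : ι → ZMod 2, (∑ x, w x * sgn (u ⬝ᵥ h x)) ^ 2
      = ∑ x, ∑ y, w x * w y * sgn (u ⬝ᵥ (h x + h y)) := by
    intro u
    rw [sq, sum_mul_sum]
    refine sum_congr rfl fun x _ => sum_congr rfl fun y _ => ?_
    rw [dotProduct_add, sgn_add]
    ring
  simp only [hsq, sum_filter, mul_sum]
  rw [sum_comm]
  refine sum_congr rfl fun x _ => ?_
  rw [sum_comm]
  refine sum_congr rfl fun y _ => ?_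
  have hcancel : h x + h y = 0 ↔ h y = h x := by
    rw [← ZModModule.sub_eq_add, sub_eq_zero, eq_comm]
  rw [← mul_sum, sum_sgn_dotProduct]
  simp only [hcancel]
  split_ifs <;> ring

lemma sq_sum_mul_sgn_dotProduct (w : (ι → ZMod 2) → ℤ) (a : ι → ZMod 2) :
    (∑ x, w x * sgn (a ⬝ᵥ x)) ^ 2 = ∑ c, (∑ x, w (x + c) * w x) * sgn (a ⬝ᵥ c) := by
  have hshift : ∀ x c : ι → ZMod 2, sgn (a ⬝ᵥ (x + c)) * sgn (a ⬝ᵥ x) = sgn (a ⬝ᵥ c) := by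
    intro x c
    rw [← sgn_add, ← dotProduct_add, add_comm x c, add_assoc, ZModModule.add_self, add_zero]
  calc (∑ x, w x * sgn (a ⬝ᵥ x)) ^ 2
      = ∑ x, ∑ c, w (x + c) * sgn (a ⬝ᵥ (x + c)) * (w x * sgn (a ⬝ᵥ x)) := by
        rw [sq, sum_mul_sum, sum_comm]
        exact sum_congr rfl fun x _ => (Fintype.sum_equiv (Equiv.addLeft x) _ _ fun _ => rfl).symm
    _ = ∑ c, (∑ x, w (x + c) * w x) * sgn (a ⬝ᵥ c) := by
        rw [sum_comm]
        refine sum_congr rfl fun c _ => ?_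
        rw [sum_mul]
        refine sum_congr rfl fun x _ => ?_
        rw [← hshift x c]
        ring

lemma sum_sq_sum_mul_sgn_dotProduct_self (w : (ι → ZMod 2) → ℤ) :
    ∑ u : ι → ZMod 2, (∑ x, w x * sgn (u ⬝ᵥ x)) ^ 2 = 2 ^ Fintype.card ι * ∑ x, w x ^ 2 := by
  simpa [sq, filter_eq'] using sum_sq_sum_mul_sgn_dotProduct w id

lemma sum_sq_sum_sgn_dotProduct {α : Type*} [Fintype α] (h : α → ι → ZMod 2) :
    ∑ u : ι → ZMod 2, (∑ x, sgn (u ⬝ᵥ h x)) ^ 2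
      = 2 ^ Fintype.card ι * ∑ x, ((univ.filter fun y => h y = h x).card : ℤ) := by
  simpa using sum_sq_sum_mul_sgn_dotProduct 1 h

end Orthogonality

lemma even_of_sq_eq_two_pow {w : ℤ} {k : ℕ} (h : w ^ 2 = 2 ^ k) : Even k := by
  have hnat : w.natAbs ^ 2 = 2 ^ k := by simpa [Int.natAbs_pow] using congrArg Int.natAbs h
  have hk : 2 * w.natAbs.factorization 2 = k := by
    simpa [Nat.factorization_pow, Nat.Prime.factorization_self Nat.prime_two] using
      congrArg (·.factorization 2) hnat
  exact ⟨_, hk ▸ two_mul _⟩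

section Walsh

variable {n : ℕ} (F : (Fin n → ZMod 2) → (Fin n → ZMod 2))

def autocorrelation (b c : Fin n → ZMod 2) : ℤ :=
  ∑ x, sgn (b ⬝ᵥ (F (x + c) + F x))

lemma walshB_eq_sum_sgn (b a : Fin n → ZMod 2) :
    walshB n F b a = ∑ x, sgn (b ⬝ᵥ F x) * sgn (a ⬝ᵥ x) := by
  simp only [walshB, sgn, dotProduct, pow_add]

lemma sum_walshB_sq (b : Fin n → ZMod 2) : ∑ a, walshB n F b a ^ 2 = 2 ^ (2 * n) := by
  simp [walshB_eq_sum_sgn, sum_sq_sum_mul_sgn_dotProduct_self, sgn_sq, two_mul, pow_add]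

lemma walshB_sq_eq_sum_autocorrelation (b a : Fin n → ZMod 2) :
    walshB n F b a ^ 2 = ∑ c, autocorrelation F b c * sgn (a ⬝ᵥ c) := by
  rw [walshB_eq_sum_sgn, sq_sum_mul_sgn_dotProduct]
  simp only [autocorrelation, dotProduct_add, sgn_add]

lemma sum_walshB_pow_four (b : Fin n → ZMod 2) :
    ∑ a, walshB n F b a ^ 4 = 2 ^ n * ∑ c, autocorrelation F b c ^ 2 := by
  simp only [show ∀ a, walshB n F b a ^ 4 = (walshB n F b a ^ 2) ^ 2 from fun a => by ring,
    walshB_sq_eq_sum_autocorrelation, sum_sq_sum_mul_sgn_dotProduct_self, Fintype.card_fin]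

lemma sum_autocorrelation_sq (c : Fin n → ZMod 2) :
    ∑ b, autocorrelation F b c ^ 2
      = 2 ^ n * ∑ x, ((univ.filter fun y => F (y + c) + F y = F (x + c) + F x).card : ℤ) := by
  simpa only [autocorrelation, Fintype.card_fin] using
    sum_sq_sum_sgn_dotProduct fun x => F (x + c) + F x

lemma autocorrelation_zero_left (c : Fin n → ZMod 2) : autocorrelation F 0 c = 2 ^ n := by
  simp [autocorrelation, sgn]

lemma sum_walshB_zero_left_pow_four : ∑ a, walshB n F 0 a ^ 4 = 2 ^ (4 * n) := by
  simp only [sum_walshB_pow_four, autocorrelation_zero_left, sum_const, card_univ,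
    Fintype.card_fun, ZMod.card, Fintype.card_fin, nsmul_eq_mul]
  push_cast
  ring

variable {F}

lemma IsAPNB.card_derivative_fiber_eq_two (hapn : IsAPNB n F) {c : Fin n → ZMod 2} (hc : c ≠ 0)
    (x : Fin n → ZMod 2) :
    (univ.filter fun y => F (y + c) + F y = F (x + c) + F x).card = 2 := by
  refine le_antisymm (hapn c hc _) ?_
  have hpair : {x, x + c} ⊆ univ.filter fun y => F (y + c) + F y = F (x + c) + F x := by
    intro y hy
    rcases mem_insert.mp hy with rfl | hy
    · simp
    · rw [mem_singleton.mp hy, mem_filter, add_assoc, ZModModule.add_self, add_zero]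
      exact ⟨mem_univ _, add_comm _ _⟩
  have hne : x ≠ x + c := fun h => hc (by simpa using h)
  simpa [card_pair hne] using card_le_card hpair

lemma IsAPNB.sum_card_derivative_fiber (hapn : IsAPNB n F) (c : Fin n → ZMod 2) :
    ∑ x, ((univ.filter fun y => F (y + c) + F y = F (x + c) + F x).card : ℤ)
      = if c = 0 then 2 ^ (2 * n) else 2 ^ (n + 1) := by
  split_ifs with hc
  · simp [hc, ZModModule.add_self, two_mul, pow_add]
  · simp [hapn.card_derivative_fiber_eq_two hc, pow_succ]

lemma IsAPNB.sum_sum_walshB_pow_four (hapn : IsAPNB n F) :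
    ∑ b, ∑ a, walshB n F b a ^ 4 = 2 ^ (2 * n) * (2 ^ (2 * n) + (2 ^ n - 1) * 2 ^ (n + 1)) := by
  have hite : ∀ c : Fin n → ZMod 2, (if c = 0 then (2 : ℤ) ^ (2 * n) else 2 ^ (n + 1))
      = 2 ^ (n + 1) + if c = 0 then 2 ^ (2 * n) - 2 ^ (n + 1) else 0 := by
    intro c; split_ifs <;> ring
  simp only [sum_walshB_pow_four, ← mul_sum]
  rw [sum_comm]
  simp only [sum_autocorrelation_sq, hapn.sum_card_derivative_fiber, ← mul_sum, hite,
    sum_add_distrib, sum_ite_eq', mem_univ, if_true, sum_const, card_univ, Fintype.card_fun,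
    ZMod.card, Fintype.card_fin, nsmul_eq_mul]
  push_cast
  ring

lemma IsTPlateauedB.sum_walshB_pow_four {b : Fin n → ZMod 2} {t : ℕ}
    (ht : IsTPlateauedB n F b t) : ∑ a, walshB n F b a ^ 4 = 2 ^ (3 * n + t) := by
  have hpow : ∀ a, walshB n F b a ^ 4 = 2 ^ (n + t) * walshB n F b a ^ 2 := by
    intro a
    rcases ht a with h | h
    · simp [h]
    · rw [← h]; ring
  rw [sum_congr rfl fun a _ => hpow a, ← mul_sum, sum_walshB_sq, ← pow_add]
  ring_nf

lemma IsTPlateauedB.even_add {b : Fin n → ZMod 2} {t : ℕ} (ht : IsTPlateauedB n F b t) :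
    Even (n + t) := by
  obtain ⟨a, ha⟩ : ∃ a, walshB n F b a ≠ 0 := by
    by_contra! h
    exact pow_ne_zero (2 * n) two_ne_zero (by simpa [h] using (sum_walshB_sq F b).symm)
  exact even_of_sq_eq_two_pow ((ht a).resolve_left ha)

lemma IsTPlateauedB.isBentB_iff {b : Fin n → ZMod 2} {t : ℕ} (ht : IsTPlateauedB n F b t) :
    IsBentB n F b ↔ t = 0 := by
  constructor
  · intro hbent
    have hne : walshB n F b 0 ≠ 0 := fun h =>
      pow_ne_zero n two_ne_zero (by simpa [h] using (hbent 0).symm)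
    have hpow := (ht 0).resolve_left hne
    rw [hbent 0, pow_right_inj₀ two_pos (by norm_num)] at hpow
    omega
  · rintro rfl a
    have hle : ∀ a, walshB n F b a ^ 2 ≤ 2 ^ n := fun a => by
      rcases ht a with h | h <;> simp [h]
    have hsum : ∑ a, walshB n F b a ^ 2 = ∑ _a : Fin n → ZMod 2, (2 : ℤ) ^ n := by
      simp [sum_walshB_sq, two_mul, pow_add]
    exact (sum_eq_sum_iff_of_le fun a _ => hle a).1 hsum a (mem_univ a)

lemma IsTPlateauedB.two_pow_modEq {b : Fin n → ZMod 2} {t : ℕ} (hn : Even n)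
    (ht : IsTPlateauedB n F b t) : (2 : ℤ) ^ t ≡ if IsBentB n F b then 1 else 0 [ZMOD 4] := by
  split_ifs with hbent
  · rw [ht.isBentB_iff.1 hbent, pow_zero]
  · have ht0 : t ≠ 0 := mt ht.isBentB_iff.2 hbent
    have h2t : 2 ≤ t := by
      obtain ⟨k, hk⟩ := ht.even_add
      obtain ⟨m, hm⟩ := hn
      omega
    exact Int.modEq_zero_iff_dvd.2 ((by norm_num : (4 : ℤ) = 2 ^ 2) ▸ pow_dvd_pow 2 h2t)

lemma IsAPNB.sum_two_pow_plateau_exponent (hapn : IsAPNB n F) {t : (Fin n → ZMod 2) → ℕ}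
    (ht : ∀ b, b ≠ 0 → IsTPlateauedB n F b (t b)) :
    ∑ b ∈ univ.filter fun b => b ≠ 0, (2 : ℤ) ^ t b = 2 ^ (n + 1) - 2 := by
  have h4 := hapn.sum_sum_walshB_pow_four
  rw [← add_sum_erase _ _ (mem_univ 0), sum_walshB_zero_left_pow_four, ← filter_ne',
    sum_congr rfl fun b hb => (ht b (mem_filter.1 hb).2).sum_walshB_pow_four] at h4
  simp only [pow_add _ (3 * n), ← mul_sum] at h4
  have hcancel : (2 : ℤ) ^ (3 * n) * (∑ b ∈ univ.filter fun b => b ≠ 0, (2 : ℤ) ^ t b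
      - (2 ^ (n + 1) - 2)) = 0 := by
    linear_combination h4
  exact sub_eq_zero.1 ((mul_eq_zero.1 hcancel).resolve_left (by positivity))

end Walsh

theorem plateaued_apn_bent_count_mod_four (n : ℕ) (hn : 0 < n) (hne : Even n)
    (F : (Fin n → ZMod 2) → (Fin n → ZMod 2))
    (hplat : IsPlateauedB n F) (hapn : IsAPNB n F) :
    (univ.filter fun b : Fin n → ZMod 2 => b ≠ 0 ∧ IsBentB n F b).card % 4 = 2 := by
  choose! t ht using hplat
  have hcount : (2 : ℤ) ^ (n + 1) - 2
      ≡ (univ.filter fun b : Fin n → ZMod 2 => b ≠ 0 ∧ IsBentB n F b).card [ZMOD 4] := by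
    rw [← hapn.sum_two_pow_plateau_exponent ht, ← filter_filter, ← sum_boole]
    exact Int.ModEq.sum fun b hb => (ht b (mem_filter.1 hb).2).two_pow_modEq hne
  have hfour : (4 : ℤ) ∣ 2 ^ (n + 1) :=
    (by norm_num : (4 : ℤ) = 2 ^ 2) ▸ pow_dvd_pow 2 (by omega)
  unfold Int.ModEq at hcount
  omega
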